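/- Fix $k \ge 0$. Construct $G_k'$ as follows: take a basic triangle ($K_3$) and $k+1$ further disjoint triangles, join every vertex of the basic triangle to every vertex of each of the other triangles (support edges); then for each support edge $uv$, create $2k+1$ new disjoint triangles and join both $u$ and $v$ to all their vertices. Then $G_k'$ is not $(0,0,k,k)$-colorable. -/
import Mathlib


/-- A graph `G` is `(d 0, …, d (k-1))`-colorable if its vertex set can be partitioned
into `k` parts such that part `i` induces a subgraph of maximum degree at most `d i`. -/
def ImpColorable {V : Type*} {k : ℕ} (G : SimpleGraph V) (d : Fin k → ℕ) : Prop :=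
  ∃ f : V → Fin k, ∀ v : V, {u | G.Adj v u ∧ f u = f v}.ncard ≤ d (f v)

/-- Vertices of `G'_k`: a basic triangle; `k+1` further triangles; and for each support
edge (a pair of a basic vertex and a vertex of one of the `k+1` triangles), `2k+1`
attached triangles. -/
abbrev GkVert' (k : ℕ) :=
  Fin 3 ⊕ (Fin (k + 1) × Fin 3) ⊕ ((Fin 3 × Fin (k + 1) × Fin 3) × Fin (2 * k + 1) × Fin 3)

/-- The graph `G'_k`: every vertex of the basic triangle is joined to every vertex of the
`k+1` other triangles (support edges), and for each support edge `uv` there are `2k+1`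
attached triangles completely joined to both `u` and `v`. -/
def GkGraph' (k : ℕ) : SimpleGraph (GkVert' k) :=
  SimpleGraph.fromRel (fun x y =>
    match x, y with
    | .inl _, .inl _ => True
    | .inl _, .inr (.inl _) => True
    | .inr (.inl (i, _)), .inr (.inl (i', _)) => i = i'
    | .inr (.inr ((b, _), _, _)), .inl a => a = b
    | .inr (.inr ((_, c), _, _)), .inr (.inl c') => c' = c
    | .inr (.inr (e, j, _)), .inr (.inr (e', j', _)) => e = e' ∧ j = j'
    | _, _ => False)

section Helpers

variable {V : Type*} [Fintype V] {k : ℕ} {G : SimpleGraph V} {f : V → Fin 4}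

lemma bound_gen (hf : ∀ v : V, {u | G.Adj v u ∧ f u = f v}.ncard ≤ ![0, 0, k, k] (f v))
    (v : V) {ι : Type*} (A : Finset ι) (w : ι → V)
    (hinj : Set.InjOn w ↑A) (hmem : ∀ j ∈ A, G.Adj v (w j) ∧ f (w j) = f v) :
    A.card ≤ k := by
  have hsub : w '' ↑A ⊆ {u | G.Adj v u ∧ f u = f v} := by
    rintro _ ⟨j, hj, rfl⟩
    exact hmem j hj
  have h1 : (w '' (A : Set ι)).ncard = A.card := by
    rw [Set.ncard_image_of_injOn hinj, Set.ncard_coe_finset]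
  have h2 : (w '' (A : Set ι)).ncard ≤ {u | G.Adj v u ∧ f u = f v}.ncard :=
    Set.ncard_le_ncard hsub (Set.toFinite _)
  have h3 : ∀ c : Fin 4, (![0, 0, k, k] : Fin 4 → ℕ) c ≤ k := by
    intro c; fin_cases c <;> simp
  have := hf v
  have h4 := h3 (f v)
  omega

lemma indep_gen (hf : ∀ v : V, {u | G.Adj v u ∧ f u = f v}.ncard ≤ ![0, 0, k, k] (f v))
    {v u : V} (hv : (f v).val < 2) (h : G.Adj v u) : f u ≠ f v := by
  intro he
  have hd : (![0, 0, k, k] : Fin 4 → ℕ) (f v) = 0 := by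
    have h0 : (f v).val = 0 ∨ (f v).val = 1 := by omega
    rcases h0 with h0 | h0
    · have : f v = 0 := Fin.ext h0
      rw [this]; simp
    · have : f v = 1 := Fin.ext h0
      rw [this]; simp
  have h1 := hf v
  rw [hd, Nat.le_zero] at h1
  have hempty := (Set.ncard_eq_zero (Set.toFinite _)).mp h1
  have : u ∈ {u | G.Adj v u ∧ f u = f v} := ⟨h, he⟩
  rw [hempty] at this
  exact this

lemma tri_gen (hf : ∀ v : V, {u | G.Adj v u ∧ f u = f v}.ncard ≤ ![0, 0, k, k] (f v))
    {x y z : V} (hxy : G.Adj x y) (hxz : G.Adj x z) (hyz : G.Adj y z) :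
    2 ≤ (f x).val ∨ 2 ≤ (f y).val ∨ 2 ≤ (f z).val := by
  by_contra h
  push_neg at h
  obtain ⟨h1, h2, h3⟩ := h
  have heq : (f x).val = (f y).val ∨ (f x).val = (f z).val ∨ (f y).val = (f z).val := by omega
  rcases heq with h' | h' | h'
  · exact indep_gen hf h1 hxy (Fin.ext h'.symm)
  · exact indep_gen hf h1 hxz (Fin.ext h'.symm)
  · exact indep_gen hf h2 hyz (Fin.ext h'.symm)

end Helpers

/-- For every `k ≥ 0`, the graph `G'_k` is not `(0,0,k,k)`-colorable. -/
theorem GkGraph'_not_00kk_colorable (k : ℕ) :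
    ¬ ImpColorable (GkGraph' k) ![0, 0, k, k] := by
  rintro ⟨f, hf⟩
  -- adjacency helpers
  have adj_basic : ∀ a b : Fin 3, a ≠ b →
      (GkGraph' k).Adj (Sum.inl a) (Sum.inl b) := by
    intro a b hab
    simp [GkGraph', SimpleGraph.fromRel_adj, hab]
  have adj_support : ∀ (a : Fin 3) (t : Fin (k + 1) × Fin 3),
      (GkGraph' k).Adj (Sum.inl a) (Sum.inr (Sum.inl t)) := by
    intro a t
    simp [GkGraph', SimpleGraph.fromRel_adj]
  have adj_tri : ∀ (i : Fin (k + 1)) (m m' : Fin 3), m ≠ m' →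
      (GkGraph' k).Adj (Sum.inr (Sum.inl (i, m))) (Sum.inr (Sum.inl (i, m'))) := by
    intro i m m' hmm
    simp [GkGraph', SimpleGraph.fromRel_adj, hmm]
  have adj_att_basic : ∀ (b : Fin 3) (t : Fin (k + 1) × Fin 3) (j : Fin (2 * k + 1)) (m : Fin 3),
      (GkGraph' k).Adj (Sum.inl b) (Sum.inr (Sum.inr ((b, t), j, m))) := by
    intro b t j m
    simp [GkGraph', SimpleGraph.fromRel_adj]
  have adj_att_tri : ∀ (b : Fin 3) (t : Fin (k + 1) × Fin 3) (j : Fin (2 * k + 1)) (m : Fin 3),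
      (GkGraph' k).Adj (Sum.inr (Sum.inl t)) (Sum.inr (Sum.inr ((b, t), j, m))) := by
    intro b t j m
    simp [GkGraph', SimpleGraph.fromRel_adj]
  have adj_att_int : ∀ (e : Fin 3 × Fin (k + 1) × Fin 3) (j : Fin (2 * k + 1)) (m m' : Fin 3),
      m ≠ m' →
      (GkGraph' k).Adj (Sum.inr (Sum.inr (e, j, m))) (Sum.inr (Sum.inr (e, j, m'))) := by
    intro e j m m' hmm
    simp [GkGraph', SimpleGraph.fromRel_adj, hmm]
  -- Step 1: the basic triangle has a vertex with colour ≥ 2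
  obtain ⟨u₀, hu⟩ : ∃ a : Fin 3, 2 ≤ (f (Sum.inl a : GkVert' k)).val := by
    rcases tri_gen hf (adj_basic 0 1 (by decide)) (adj_basic 0 2 (by decide))
      (adj_basic 1 2 (by decide)) with h | h | h
    exacts [⟨0, h⟩, ⟨1, h⟩, ⟨2, h⟩]
  set c := f (Sum.inl u₀ : GkVert' k) with hc
  -- Step 2: some triangle T_i has no vertex coloured c
  have step2 : ∃ i : Fin (k + 1), ∀ m : Fin 3,
      f (Sum.inr (Sum.inl (i, m)) : GkVert' k) ≠ c := by
    by_contra hcon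
    push_neg at hcon
    choose m hm using hcon
    have hinj : Set.InjOn (fun i : Fin (k + 1) =>
        (Sum.inr (Sum.inl (i, m i)) : GkVert' k)) ↑(Finset.univ : Finset (Fin (k + 1))) := by
      intro i _ i' _ h
      simpa using (congrArg (fun x : GkVert' k =>
        match x with
        | Sum.inr (Sum.inl p) => p.1
        | _ => i) h)
    have := bound_gen hf (Sum.inl u₀) (Finset.univ : Finset (Fin (k + 1)))
      (fun i => Sum.inr (Sum.inl (i, m i))) hinj
      (fun i _ => ⟨adj_support u₀ (i, m i), hm i⟩)
    simp [Finset.card_univ] at this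
  obtain ⟨i, hi⟩ := step2
  -- Step 3: that triangle has a vertex of colour c' ≥ 2, c' ≠ c
  obtain ⟨m₀, hm₀⟩ : ∃ m : Fin 3, 2 ≤ (f (Sum.inr (Sum.inl (i, m)) : GkVert' k)).val := by
    rcases tri_gen hf (adj_tri i 0 1 (by decide)) (adj_tri i 0 2 (by decide))
      (adj_tri i 1 2 (by decide)) with h | h | h
    exacts [⟨0, h⟩, ⟨1, h⟩, ⟨2, h⟩]
  set c' := f (Sum.inr (Sum.inl (i, m₀)) : GkVert' k) with hc'
  have hcc' : c' ≠ c := hi m₀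
  have htwo : ∀ d : Fin 4, 2 ≤ d.val → d = c ∨ d = c' := by
    intro d hd
    have h1 : c.val < 4 := c.isLt
    have h2 : c'.val < 4 := c'.isLt
    have h3 : d.val < 4 := d.isLt
    have h4 : c.val ≠ c'.val := fun h => hcc' (Fin.ext h.symm)
    have h5 : d.val = c.val ∨ d.val = c'.val := by omega
    rcases h5 with h | h
    · exact Or.inl (Fin.ext h)
    · exact Or.inr (Fin.ext h)
  -- Step 4: each attached triangle on the edge (u₀, (i, m₀)) has a vertex coloured c or c'
  have step4 : ∀ j : Fin (2 * k + 1), ∃ m : Fin 3,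
      f (Sum.inr (Sum.inr ((u₀, i, m₀), j, m)) : GkVert' k) = c ∨
      f (Sum.inr (Sum.inr ((u₀, i, m₀), j, m)) : GkVert' k) = c' := by
    intro j
    rcases tri_gen hf (adj_att_int (u₀, i, m₀) j 0 1 (by decide))
      (adj_att_int (u₀, i, m₀) j 0 2 (by decide))
      (adj_att_int (u₀, i, m₀) j 1 2 (by decide)) with h | h | h
    exacts [⟨0, htwo _ h⟩, ⟨1, htwo _ h⟩, ⟨2, htwo _ h⟩]
  choose w hw using step4
  -- Step 5: pigeonhole
  set A : Finset (Fin (2 * k + 1)) := Finset.univ.filter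
    (fun j => f (Sum.inr (Sum.inr ((u₀, i, m₀), j, w j)) : GkVert' k) = c) with hA
  set B : Finset (Fin (2 * k + 1)) := Finset.univ.filter
    (fun j => f (Sum.inr (Sum.inr ((u₀, i, m₀), j, w j)) : GkVert' k) = c') with hB
  have hABinj : ∀ (A' : Finset (Fin (2 * k + 1))), Set.InjOn
      (fun j : Fin (2 * k + 1) => (Sum.inr (Sum.inr ((u₀, i, m₀), j, w j)) : GkVert' k)) ↑A' := by
    intro A' j _ j' _ h
    simpa using (congrArg (fun x : GkVert' k =>
      match x with
      | Sum.inr (Sum.inr (_, jj, _)) => jj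
      | _ => j) h)
  have hAcard : A.card ≤ k := by
    refine bound_gen hf (Sum.inl u₀) A _ (hABinj A) ?_
    intro j hj
    rw [hA, Finset.mem_filter] at hj
    exact ⟨adj_att_basic u₀ (i, m₀) j (w j), hj.2⟩
  have hBcard : B.card ≤ k := by
    refine bound_gen hf (Sum.inr (Sum.inl (i, m₀))) B _ (hABinj B) ?_
    intro j hj
    rw [hB, Finset.mem_filter] at hj
    exact ⟨adj_att_tri u₀ (i, m₀) j (w j), hj.2⟩
  have hUnion : A ∪ B = Finset.univ := by
    ext j
    simp only [hA, hB, Finset.mem_union, Finset.mem_filter, Finset.mem_univ, true_and, iff_true]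
    exact hw j
  have hle := Finset.card_union_le A B
  rw [hUnion] at hle
  simp [Finset.card_univ] at hle
  omega
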